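/- Let f ∈ F_{II} with II(f) < ∞ and set g = f·II(f), i.e., g_i = Σ_{k∈P(i)} (1/(μ_k q_{kk*})) Σ_{j∈T_k} μ_j f_j with g_0 = 0. Then g ∈ F_I (g_i > g_{i*} for all i ∈ T\{0}), g_i - g_{i*} = (1/(μ_i q_{ii*})) Σ_{j∈T_i} μ_j f_j, and inf_{i∈T\{0}} I_i(g)^{-1} ≥ inf_{k∈T\{0}} II_k(f)^{-1}. -/

import Mathlib

open Finset
open scoped Classical

structure BDTree (V : Type*) [Fintype V] where
  root : V
  parent : V → V
  layer : V → ℕ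
  q : V → V → ℝ
  parent_root : parent root = root
  layer_root : layer root = 0
  layer_parent : ∀ i, i ≠ root → layer i = layer (parent i) + 1
  reach : ∀ i, ∃ n, parent^[n] i = root
  q_pos_up : ∀ i, i ≠ root → 0 < q i (parent i)
  q_pos_down : ∀ i, i ≠ root → 0 < q (parent i) i

namespace BDTree

variable {V : Type*} [Fintype V] (T : BDTree V)

/-- The set of sons of a vertex. -/
noncomputable def sons (i : V) : Finset V :=
  Finset.univ.filter fun j => j ≠ T.root ∧ T.parent j = i

/-- The subtree `T_k` rooted at `k` (including `k`). -/
noncomputable def subtree (k : V) : Finset V :=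
  Finset.univ.filter fun j => ∃ n, T.parent^[n] j = k

/-- The path set `P(i)`: vertices (excluding the root) on the path from `i` to the root. -/
noncomputable def pathSet (i : V) : Finset V :=
  Finset.univ.filter fun k => k ≠ T.root ∧ ∃ n, T.parent^[n] i = k

/-- The symmetric measure `μ`. -/
noncomputable def mu (k : V) : ℝ :=
  ∏ j ∈ T.pathSet k, T.q (T.parent j) j / T.q j (T.parent j)

/-- The operator `Ω`. -/
noncomputable def Omega (g : V → ℝ) (i : V) : ℝ :=
  (∑ j ∈ T.sons i, T.q i j * (g j - g i)) + T.q i (T.parent i) * (g (T.parent i) - g i)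

/-- The set of non-root vertices `T \ {0}`. -/
noncomputable def nonroot : Finset V := Finset.univ.filter fun i => i ≠ T.root

/-- The Dirichlet form `D(f)`. -/
noncomputable def D (f : V → ℝ) : ℝ :=
  ∑ i ∈ T.nonroot, T.mu i * T.q i (T.parent i) * (f i - f (T.parent i)) ^ 2

/-- `μ(f²)`. -/
noncomputable def norm2 (f : V → ℝ) : ℝ := ∑ i ∈ T.nonroot, T.mu i * f i ^ 2

/-- The principal Dirichlet eigenvalue `λ₀`, via the classical variational formula. -/
noncomputable def lam0 : ℝ := sInf {r | ∃ f : V → ℝ, f T.root = 0 ∧ T.norm2 f = 1 ∧ r = T.D f}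

/-- The single-summation operator `I`. -/
noncomputable def opI (f : V → ℝ) (i : V) : ℝ :=
  (∑ j ∈ T.subtree i, T.mu j * f j) /
    (T.mu i * T.q i (T.parent i) * (f i - f (T.parent i)))

/-- The double-summation operator `II`. -/
noncomputable def opII (f : V → ℝ) (i : V) : ℝ :=
  (∑ k ∈ T.pathSet i, (1 / (T.mu k * T.q k (T.parent k))) *
      ∑ j ∈ T.subtree k, T.mu j * f j) / f i

/-- The difference-form operator `R`; at a son of the root the convention `w_0 = ∞`,
`1/∞ = 0` is used, i.e. the term `w i⁻¹` is replaced by `0`. -/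
noncomputable def R (w : V → ℝ) (i : V) : ℝ :=
  T.q i (T.parent i) * (1 - (if T.parent i = T.root then 0 else (w i)⁻¹)) +
    ∑ j ∈ T.sons i, T.q i j * (1 - w j)

/-- Membership in the test-function class `W = {w : w > 1, w_0 = ∞}` (the value at a son
of the root plays the role of `∞` and is not used by `R`). -/
def memW (w : V → ℝ) : Prop := ∀ i, i ≠ T.root → T.parent i ≠ T.root → 1 < w i

/-- `φ_j = Σ_{k∈P(j)} 1/(μ_k q_{kk*})`. -/
noncomputable def phi (j : V) : ℝ :=
  ∑ k ∈ T.pathSet j, 1 / (T.mu k * T.q k (T.parent k))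

end BDTree

/-!
Telescoping along the path to the root, `g i - g i*` is the single term of `g i` indexed
by `i` itself, which is positive; this gives `g ∈ F_I` and the difference identity, and
turns `I_i(g)⁻¹` into the ratio `Σ_{T_i} μ f / Σ_{T_i} μ g`. Since `II_k(f)⁻¹ = f_k / g_k`,
every term satisfies `c · g_j ≤ f_j` for `c = inf II(f)⁻¹`, and a ratio of `μ`-weighted
sums is at least the smallest pointwise ratio.
-/

theorem le_sum_mul_div_sum_mul {ι : Type*} {s : Finset ι} {w a b : ι → ℝ} {c : ℝ}
    (hw : ∀ j ∈ s, 0 ≤ w j) (hb : ∀ j ∈ s, 0 < b j) (hsum : 0 < ∑ j ∈ s, w j * b j)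
    (hc : ∀ j ∈ s, c ≤ a j / b j) :
    c ≤ (∑ j ∈ s, w j * a j) / ∑ j ∈ s, w j * b j := by
  rw [le_div_iff₀ hsum, mul_sum]
  refine sum_le_sum fun j hj => ?_
  have hcb : c * b j ≤ a j := (le_div_iff₀ (hb j hj)).mp (hc j hj)
  calc c * (w j * b j) = w j * (c * b j) := by ring
    _ ≤ w j * a j := mul_le_mul_of_nonneg_left hcb (hw j hj)

namespace BDTree

variable {V : Type*} [Fintype V] (T : BDTree V)

theorem parent_iterate_root (n : ℕ) : T.parent^[n] T.root = T.root :=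
  Function.iterate_fixed T.parent_root n

theorem pathSet_root : T.pathSet T.root = ∅ := by
  ext k
  simp only [pathSet, mem_filter, mem_univ, true_and, notMem_empty, iff_false,
    parent_iterate_root]
  rintro ⟨hk, n, rfl⟩
  exact hk rfl

theorem layer_parent_iterate_le (j : V) (n : ℕ) : T.layer (T.parent^[n] j) ≤ T.layer j := by
  induction n with
  | zero => rfl
  | succ n ih =>
    rw [Function.iterate_succ_apply']
    by_cases h : T.parent^[n] j = T.root
    · rw [h, T.parent_root, T.layer_root]
      exact Nat.zero_le _
    · have := T.layer_parent _ h
      omega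

theorem notMem_pathSet_parent {i : V} (hi : i ≠ T.root) : i ∉ T.pathSet (T.parent i) := by
  simp only [pathSet, mem_filter, mem_univ, true_and, not_and]
  rintro _ ⟨n, hn⟩
  have hle := T.layer_parent_iterate_le (T.parent i) n
  rw [hn, T.layer_parent i hi] at hle
  omega

theorem mem_pathSet_self {i : V} (hi : i ≠ T.root) : i ∈ T.pathSet i := by
  simp only [pathSet, mem_filter, mem_univ, true_and]
  exact ⟨hi, 0, rfl⟩

theorem pathSet_eq_insert {i : V} (hi : i ≠ T.root) :
    T.pathSet i = insert i (T.pathSet (T.parent i)) := by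
  ext k
  simp only [pathSet, mem_filter, mem_univ, true_and, mem_insert]
  constructor
  · rintro ⟨hk, _ | n, hn⟩
    · exact Or.inl hn.symm
    · exact Or.inr ⟨hk, n, by rwa [Function.iterate_succ_apply] at hn⟩
  · rintro (rfl | ⟨hk, n, hn⟩)
    · exact ⟨hi, 0, rfl⟩
    · exact ⟨hk, n + 1, by rwa [Function.iterate_succ_apply]⟩

theorem sum_pathSet_of_ne_root {i : V} (hi : i ≠ T.root) (h : V → ℝ) :
    ∑ k ∈ T.pathSet i, h k = h i + ∑ k ∈ T.pathSet (T.parent i), h k := by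
  rw [T.pathSet_eq_insert hi, sum_insert (T.notMem_pathSet_parent hi)]

theorem sum_pathSet_pos {h : V → ℝ} (hpos : ∀ k, k ≠ T.root → 0 < h k) {i : V}
    (hi : i ≠ T.root) : 0 < ∑ k ∈ T.pathSet i, h k :=
  sum_pos (fun k hk => hpos k (mem_filter.mp hk).2.1) ⟨i, T.mem_pathSet_self hi⟩

theorem mem_nonroot {i : V} : i ∈ T.nonroot ↔ i ≠ T.root := by
  simp [nonroot]

theorem mu_pos (k : V) : 0 < T.mu k :=
  prod_pos fun j hj =>
    have hj : j ≠ T.root := (mem_filter.mp hj).2.1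
    div_pos (T.q_pos_down j hj) (T.q_pos_up j hj)

theorem mem_subtree_self (k : V) : k ∈ T.subtree k := by
  simp only [subtree, mem_filter, mem_univ, true_and]
  exact ⟨0, rfl⟩

theorem ne_root_of_mem_subtree {k j : V} (hk : k ≠ T.root) (hj : j ∈ T.subtree k) :
    j ≠ T.root := by
  rintro rfl
  obtain ⟨n, hn⟩ := (mem_filter.mp hj).2
  rw [T.parent_iterate_root] at hn
  exact hk hn.symm

theorem sum_subtree_mu_mul_pos {h : V → ℝ} (hpos : ∀ j, j ≠ T.root → 0 < h j) {k : V}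
    (hk : k ≠ T.root) : 0 < ∑ j ∈ T.subtree k, T.mu j * h j :=
  sum_pos (fun j hj => mul_pos (T.mu_pos j) (hpos j (T.ne_root_of_mem_subtree hk hj)))
    ⟨k, T.mem_subtree_self k⟩

theorem inv_opI_eq_of_sub_eq {g : V → ℝ} {i : V} (hi : i ≠ T.root) {m : ℝ}
    (hsub : g i - g (T.parent i) = 1 / (T.mu i * T.q i (T.parent i)) * m) :
    (T.opI g i)⁻¹ = m / ∑ j ∈ T.subtree i, T.mu j * g j := by
  have hmuq : T.mu i * T.q i (T.parent i) ≠ 0 :=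
    (mul_pos (T.mu_pos i) (T.q_pos_up i hi)).ne'
  rw [opI, inv_div, hsub, ← mul_assoc, mul_one_div_cancel hmuq, one_mul]

end BDTree

theorem stmt6_general {V : Type*} [Fintype V] (T : BDTree V) (hne : T.nonroot.Nonempty)
    (f : V → ℝ) (hfpos : ∀ i, i ≠ T.root → 0 < f i)
    (g : V → ℝ)
    (hg : ∀ i, g i = ∑ k ∈ T.pathSet i,
        (1 / (T.mu k * T.q k (T.parent k))) * ∑ j ∈ T.subtree k, T.mu j * f j) :
    g T.root = 0 ∧
    (∀ i, i ≠ T.root → g (T.parent i) < g i) ∧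
    (∀ i, i ≠ T.root → g i - g (T.parent i)
        = (1 / (T.mu i * T.q i (T.parent i))) * ∑ j ∈ T.subtree i, T.mu j * f j) ∧
    T.nonroot.inf' hne (fun k => (T.opII f k)⁻¹) ≤
      T.nonroot.inf' hne fun i => (T.opI g i)⁻¹ := by
  have hterm : ∀ k, k ≠ T.root →
      0 < 1 / (T.mu k * T.q k (T.parent k)) * ∑ j ∈ T.subtree k, T.mu j * f j := fun k hk =>
    mul_pos (one_div_pos.mpr (mul_pos (T.mu_pos k) (T.q_pos_up k hk)))
      (T.sum_subtree_mu_mul_pos hfpos hk)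
  have hdiff : ∀ i, i ≠ T.root → g i - g (T.parent i)
      = (1 / (T.mu i * T.q i (T.parent i))) * ∑ j ∈ T.subtree i, T.mu j * f j := fun i hi => by
    rw [hg i, hg (T.parent i), T.sum_pathSet_of_ne_root hi, add_sub_cancel_right]
  have hgpos : ∀ i, i ≠ T.root → 0 < g i := fun i hi => hg i ▸ T.sum_pathSet_pos hterm hi
  refine ⟨by rw [hg, T.pathSet_root, sum_empty], fun i hi => ?_, hdiff,
    le_inf' _ _ fun i hi => ?_⟩
  · linarith [hdiff i hi, hterm i hi]
  replace hi : i ≠ T.root := T.mem_nonroot.mp hi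
  rw [T.inv_opI_eq_of_sub_eq hi (hdiff i hi)]
  refine le_sum_mul_div_sum_mul (fun j _ => (T.mu_pos j).le)
    (fun j hj => hgpos j (T.ne_root_of_mem_subtree hi hj))
    (T.sum_subtree_mu_mul_pos hgpos hi) fun j hj => ?_
  replace hj : j ≠ T.root := T.ne_root_of_mem_subtree hi hj
  calc T.nonroot.inf' hne (fun k => (T.opII f k)⁻¹) ≤ (T.opII f j)⁻¹ :=
        inf'_le _ (T.mem_nonroot.mpr hj)
    _ = f j / g j := by rw [BDTree.opII, ← hg j, inv_div]

/-- for `f ∈ F_II`, `g = f·II(f)` belongs to `F_I`, satisfies the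
difference identity, and `inf I(g)⁻¹ ≥ inf II(f)⁻¹`. -/
theorem stmt6 {V : Type*} [Fintype V] (T : BDTree V) (hne : T.nonroot.Nonempty)
    (f : V → ℝ) (hf0 : f T.root = 0) (hfpos : ∀ i, i ≠ T.root → 0 < f i)
    (g : V → ℝ)
    (hg : ∀ i, g i = ∑ k ∈ T.pathSet i,
        (1 / (T.mu k * T.q k (T.parent k))) * ∑ j ∈ T.subtree k, T.mu j * f j) :
    g T.root = 0 ∧
    (∀ i, i ≠ T.root → g (T.parent i) < g i) ∧
    (∀ i, i ≠ T.root → g i - g (T.parent i)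
        = (1 / (T.mu i * T.q i (T.parent i))) * ∑ j ∈ T.subtree i, T.mu j * f j) ∧
    T.nonroot.inf' hne (fun k => (T.opII f k)⁻¹) ≤
      T.nonroot.inf' hne fun i => (T.opI g i)⁻¹ :=
  stmt6_general T hne f hfpos g hg
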